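/- Let u, s ∈ S^{m−1} ⊂ ℝ^m with ⟨u,s⟩ = 0, τ = u + is, τ† = −u + is, and f_{τ,k,ℓ}(z) = ⟨z,τ⟩^k⟨z,τ†⟩^ℓ. Then for all k, ℓ ∈ ℕ: ∫_{S^{m−1}} ∫_0^π conj(f_{τ,k,ℓ}(e^{iθ}ω)) · f_{τ,k,ℓ}(e^{iθ}ω) dθ dS(ω) = 2π^{m/2+1} Γ(k+ℓ+1)/Γ(k+ℓ+m/2). -/

import Mathlib

noncomputable section

open MeasureTheory Metric

/-- The bilinear pairing `⟨u,v⟩ = ∑_j u_j v_j` on `ℂ^m`. -/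
def pairC {m : ℕ} (u v : Fin m → ℂ) : ℂ := ∑ j, u j * v j

/-- `ℝ^m` with its Euclidean structure. -/
abbrev V (m : ℕ) := EuclideanSpace ℝ (Fin m)

/-- The real bilinear pairing `⟨x,y⟩ = ∑_j x_j y_j` on `ℝ^m`. -/
def pairR {m : ℕ} (x y : V m) : ℝ := ∑ j, x j * y j

/-- `τ = u + i s ∈ ℂ^m`, for real vectors `u, s`. -/
def tauP {m : ℕ} (u s : V m) : Fin m → ℂ := fun j => (u j : ℂ) + (s j : ℂ) * Complex.I

/-- `τ† = -u + i s ∈ ℂ^m`, for real vectors `u, s`. -/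
def tauM {m : ℕ} (u s : V m) : Fin m → ℂ := fun j => -(u j : ℂ) + (s j : ℂ) * Complex.I

/-- `e^{iθ} ω ∈ ℂ^m`, a point of the Lie sphere (for `ω ∈ S^{m-1}`). -/
def lvec {m : ℕ} (θ : ℝ) (ω : V m) : Fin m → ℂ :=
  fun j => Complex.exp (θ * Complex.I) * (ω j : ℂ)

/-- The surface measure `dS` on the unit sphere `S^{m-1} ⊂ ℝ^m`
(the total mass of this measure is the surface area `A_m`). -/
abbrev sphMeasure (m : ℕ) : Measure (sphere (0 : V m) 1) := (volume : Measure (V m)).toSphere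

/-!
The integrand `|f_{τ,k,ℓ}(e^{iθ}ω)|² = (⟨ω,u⟩² + ⟨ω,s⟩²)^(k+ℓ) = ‖P ω‖^(2(k+ℓ))` does not depend
on `θ`, where `P` is the orthogonal projection onto the plane `K` spanned by the orthonormal pair
`u, s`. The sphere integral of this homogeneous function comes from evaluating the Gaussian
integral `∫ ‖P x‖^(2n) e^(-‖x‖²) dx` over `ℝ^m` in two ways: in polar coordinates it is the sphere
integral times `Γ(n + m/2)/2`, while the isometric splitting `ℝ^m = K ⊕ Kᗮ` gives
`π Γ(n+1) · π^((m-2)/2)`.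
-/

open Real Set Module
open scoped RealInnerProductSpace

theorem integral_volumeIoiPow (N : ℕ) (f : ℝ → ℝ) :
    ∫ r, f r ∂(Measure.volumeIoiPow N) = ∫ r in Ioi (0 : ℝ), r ^ N * f r := by
  rw [Measure.volumeIoiPow, integral_withDensity_eq_integral_toReal_smul
      (by fun_prop) (.of_forall fun _ => ENNReal.ofReal_lt_top),
    integral_subtype_comap measurableSet_Ioi fun r => (ENNReal.ofReal (r ^ N)).toReal • f r]
  refine setIntegral_congr_fun measurableSet_Ioi fun r hr => ?_
  rw [ENNReal.toReal_ofReal (pow_nonneg (le_of_lt hr) N), smul_eq_mul]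

theorem integral_Ioi_pow_mul_exp_neg_sq (M : ℕ) :
    ∫ r in Ioi (0 : ℝ), r ^ M * rexp (-r ^ 2) = Gamma ((M + 1) / 2) / 2 := by
  have h := integral_rpow_mul_exp_neg_rpow (p := 2) (q := M) two_pos
    (neg_one_lt_zero.trans_le (Nat.cast_nonneg M))
  simp only [Real.rpow_natCast, Real.rpow_two] at h
  rw [h, one_div, inv_mul_eq_div]

theorem integral_norm_pow_mul_exp_neg_norm_sq_of_finrank_eq_two {F : Type*}
    [NormedAddCommGroup F] [InnerProductSpace ℝ F] [FiniteDimensional ℝ F] [MeasurableSpace F]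
    [BorelSpace F] (hF : finrank ℝ F = 2) (n : ℕ) :
    ∫ y : F, ‖y‖ ^ (2 * n) * rexp (-‖y‖ ^ 2) = π * Gamma (n + 1) := by
  let e : ℂ ≃ₗᵢ[ℝ] F :=
    Complex.isometryOfOrthonormal ((stdOrthonormalBasis ℝ F).reindex (finCongr hF))
  have h := Complex.integral_rpow_mul_exp_neg_rpow (p := 2) (q := (2 * n : ℕ)) one_le_two
    (by linarith [(Nat.cast_nonneg (2 * n) : (0 : ℝ) ≤ _)])
  simp only [Real.rpow_natCast, Real.rpow_two] at h
  rw [← e.measurePreserving.integral_comp e.toHomeomorph.measurableEmbedding]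
  simp only [LinearIsometryEquiv.norm_map, h]
  push_cast
  ring_nf

section InnerProductSpace

variable {E : Type*} [NormedAddCommGroup E] [InnerProductSpace ℝ E] [FiniteDimensional ℝ E]

theorem norm_sq_orthogonalProjectionOnto_span {ι : Type*} [Fintype ι] {v : ι → E}
    (hv : Orthonormal ℝ v) (x : E) :
    ‖(Submodule.span ℝ (range v)).orthogonalProjectionOnto x‖ ^ 2 = ∑ i, ⟪v i, x⟫ ^ 2 := by
  let b := (Basis.span hv.linearIndependent).toOrthonormalBasis (by
    rw [funext (Basis.span_apply hv.linearIndependent)]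
    exact orthonormal_span hv)
  rw [← b.sum_sq_inner_right]
  simp [b, Basis.span_apply]

variable [MeasurableSpace E] [BorelSpace E]

theorem integral_mul_exp_neg_norm_sq_of_homogeneous [Nontrivial E] {g : E → ℝ} {d : ℕ}
    (hg : ∀ (c : ℝ) (x : E), 0 < c → g (c • x) = c ^ d * g x) :
    ∫ x, g x * rexp (-‖x‖ ^ 2) =
      (∫ ω : sphere (0 : E) 1, g ω ∂(volume : Measure E).toSphere) *
        (Gamma ((d + finrank ℝ E) / 2) / 2) := by
  let G : E → ℝ := fun x => g x * rexp (-‖x‖ ^ 2)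
  let radial : ℝ → ℝ := fun r => r ^ d * rexp (-r ^ 2)
  have hpolar : ∀ p : sphere (0 : E) 1 × Ioi (0 : ℝ),
      G ((homeomorphUnitSphereProd E).symm p) = g p.1 * radial p.2 := by
    rintro ⟨ω, r, hr⟩
    simp only [G, radial, homeomorphUnitSphereProd_symm_apply_coe, hg r ω hr, norm_smul,
      norm_eq_of_mem_sphere ω, Real.norm_of_nonneg (le_of_lt hr), mul_one]
    ring
  have hpos : 0 < finrank ℝ E := finrank_pos
  calc ∫ x, G x
      = ∫ x : ({0}ᶜ : Set E), G x ∂(volume.comap Subtype.val) := by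
        rw [integral_subtype_comap (measurableSet_singleton 0).compl, restrict_compl_singleton]
    _ = ∫ p, G ((homeomorphUnitSphereProd E).symm p)
          ∂((volume : Measure E).toSphere.prod (Measure.volumeIoiPow (finrank ℝ E - 1))) := by
        rw [← (Measure.measurePreserving_homeomorphUnitSphereProd volume).integral_comp
          (homeomorphUnitSphereProd E).measurableEmbedding]
        simp only [Homeomorph.symm_apply_apply]
    _ = _ := by
        simp only [hpolar]
        rw [integral_prod_mul (fun ω : sphere (0 : E) 1 => g ω) (fun r : Ioi (0 : ℝ) => radial r),
          integral_volumeIoiPow]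
        simp only [radial, ← mul_assoc, ← pow_add]
        rw [integral_Ioi_pow_mul_exp_neg_sq]
        push_cast [Nat.cast_sub hpos]
        ring_nf

theorem integral_comp_orthogonalProjectionOnto_mul_exp_neg_norm_sq (K : Submodule ℝ E)
    (f : K → ℝ) :
    ∫ x : E, f (K.orthogonalProjectionOnto x) * rexp (-‖x‖ ^ 2) =
      (∫ y : K, f y * rexp (-‖y‖ ^ 2)) * π ^ ((finrank ℝ Kᗮ : ℝ) / 2) := by
  let g : WithLp 2 (K × Kᗮ) → ℝ := fun w => f w.fst * rexp (-‖w.fst‖ ^ 2) * rexp (-‖w.snd‖ ^ 2)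
  have hg : ∀ x : E, g (K.orthogonalDecomposition x) =
      f (K.orthogonalProjectionOnto x) * rexp (-‖x‖ ^ 2) := by
    intro x
    simp only [g, K.orthogonalDecomposition_apply, WithLp.toLp_fst, WithLp.toLp_snd, mul_assoc,
      ← Real.exp_add, K.norm_sq_eq_add_norm_sq_projection x, neg_add]
  simp_rw [← hg]
  rw [K.orthogonalDecomposition.measurePreserving.integral_comp
      K.orthogonalDecomposition.toHomeomorph.measurableEmbedding,
    ← (WithLp.volume_preserving_toLp K Kᗮ).integral_comp
      (MeasurableEquiv.toLp 2 (K × Kᗮ)).measurableEmbedding,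
    Measure.volume_eq_prod]
  simp only [g, WithLp.toLp_fst, WithLp.toLp_snd]
  rw [integral_prod_mul (fun y : K => f y * rexp (-‖y‖ ^ 2)) (fun z : Kᗮ => rexp (-‖z‖ ^ 2))]
  congr 1
  simpa using GaussianFourier.integral_rexp_neg_mul_sq_norm (V := Kᗮ) one_pos

theorem integral_sphere_norm_orthogonalProjectionOnto_pow (K : Submodule ℝ E)
    (hK : finrank ℝ K = 2) (n : ℕ) :
    ∫ ω : sphere (0 : E) 1, ‖K.orthogonalProjectionOnto ω‖ ^ (2 * n)
        ∂(volume : Measure E).toSphere =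
      2 * π ^ ((finrank ℝ E : ℝ) / 2) * Gamma (n + 1) / Gamma (n + (finrank ℝ E : ℝ) / 2) := by
  have hKE : 2 ≤ finrank ℝ E := hK ▸ K.finrank_le
  have : Nontrivial E := Module.nontrivial_of_finrank_pos (R := ℝ) (by omega)
  have hhom : ∀ (c : ℝ) (x : E), 0 < c →
      ‖K.orthogonalProjectionOnto (c • x)‖ ^ (2 * n) =
        c ^ (2 * n) * ‖K.orthogonalProjectionOnto x‖ ^ (2 * n) := by
    intro c x hc
    rw [map_smul, norm_smul, Real.norm_of_nonneg hc.le, mul_pow]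
  have hgauss := (integral_mul_exp_neg_norm_sq_of_homogeneous
    (g := fun x => ‖K.orthogonalProjectionOnto x‖ ^ (2 * n)) hhom).symm
  rw [integral_comp_orthogonalProjectionOnto_mul_exp_neg_norm_sq K (‖·‖ ^ (2 * n)),
    integral_norm_pow_mul_exp_neg_norm_sq_of_finrank_eq_two hK] at hgauss
  have hpow : π ^ ((finrank ℝ E : ℝ) / 2) = π * π ^ ((finrank ℝ Kᗮ : ℝ) / 2) := by
    rw [mul_comm, ← Real.rpow_add_one pi_ne_zero, ← K.finrank_add_finrank_orthogonal, hK]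
    push_cast
    ring_nf
  have hΓ : 0 < Gamma (n + (finrank ℝ E : ℝ) / 2) := Gamma_pos_of_pos (by positivity)
  rw [eq_div_iff hΓ.ne', hpow]
  push_cast at hgauss
  rw [show ((2 * n : ℝ) + finrank ℝ E) / 2 = n + (finrank ℝ E : ℝ) / 2 by ring] at hgauss
  linear_combination 2 * hgauss

end InnerProductSpace

lemma pairR_eq_inner {m : ℕ} (x y : V m) : pairR x y = ⟪x, y⟫ := by
  simp [pairR, PiLp.inner_apply, mul_comm]

lemma pairC_lvec_tauP {m : ℕ} (u s : V m) (θ : ℝ) (ω : V m) :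
    pairC (lvec θ ω) (tauP u s) =
      Complex.exp (θ * Complex.I) * (pairR ω u + pairR ω s * Complex.I) := by
  simp only [pairC, lvec, tauP, pairR, Complex.ofReal_sum, Complex.ofReal_mul, Finset.sum_mul,
    Finset.mul_sum, ← Finset.sum_add_distrib]
  exact Finset.sum_congr rfl fun j _ => by ring

lemma pairC_lvec_tauM {m : ℕ} (u s : V m) (θ : ℝ) (ω : V m) :
    pairC (lvec θ ω) (tauM u s) =
      Complex.exp (θ * Complex.I) * ((-pairR ω u : ℝ) + pairR ω s * Complex.I) := by
  simp only [pairC, lvec, tauM, pairR, Complex.ofReal_neg, Complex.ofReal_sum,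
    Complex.ofReal_mul, Finset.sum_mul, Finset.mul_sum, ← Finset.sum_neg_distrib,
    ← Finset.sum_add_distrib]
  exact Finset.sum_congr rfl fun j _ => by ring

lemma conj_mul_self_pairC_lvec {m : ℕ} (u s ω : V m) (θ : ℝ) (k l : ℕ) :
    starRingEnd ℂ (pairC (lvec θ ω) (tauP u s) ^ k * pairC (lvec θ ω) (tauM u s) ^ l) *
        (pairC (lvec θ ω) (tauP u s) ^ k * pairC (lvec θ ω) (tauM u s) ^ l) =
      (((pairR ω u ^ 2 + pairR ω s ^ 2) ^ (k + l) : ℝ) : ℂ) := by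
  rw [← Complex.normSq_eq_conj_mul_self, pairC_lvec_tauP, pairC_lvec_tauM]
  have hexp : Complex.normSq (Complex.exp (θ * Complex.I)) = 1 := by
    rw [Complex.normSq_eq_norm_sq, Complex.norm_exp_ofReal_mul_I, one_pow]
  simp only [map_mul, map_pow, hexp, one_mul, Complex.normSq_add_mul_I, neg_sq]
  push_cast
  ring

theorem stmt4_general (m : ℕ)
    (u s : sphere (0 : V m) 1) (hus : pairR (u : V m) (s : V m) = 0) (k l : ℕ) :
    (∫ ω : sphere (0 : V m) 1,
      (∫ θ in (0:ℝ)..Real.pi,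
        (starRingEnd ℂ)
            (pairC (lvec θ ω) (tauP (u : V m) (s : V m)) ^ k * pairC (lvec θ ω) (tauM (u : V m) (s : V m)) ^ l) *
          (pairC (lvec θ ω) (tauP (u : V m) (s : V m)) ^ k * pairC (lvec θ ω) (tauM (u : V m) (s : V m)) ^ l))
      ∂(sphMeasure m)) =
    ((2 * Real.pi ^ ((m : ℝ) / 2 + 1) *
        (Real.Gamma ((k : ℝ) + l + 1) / Real.Gamma ((k : ℝ) + l + (m : ℝ) / 2)) : ℝ) : ℂ) := by
  have hv : Orthonormal ℝ ![(u : V m), s] := by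
    simp [norm_eq_of_mem_sphere, ← pairR_eq_inner, hus]
  set K := Submodule.span ℝ (range ![(u : V m), s]) with hK_def
  have hK : finrank ℝ K = 2 := by simpa using finrank_span_eq_card hv.linearIndependent
  have hθ : ∀ ω : sphere (0 : V m) 1,
      (∫ θ in (0:ℝ)..π,
        starRingEnd ℂ (pairC (lvec θ ω) (tauP (u : V m) s) ^ k *
            pairC (lvec θ ω) (tauM (u : V m) s) ^ l) *
          (pairC (lvec θ ω) (tauP (u : V m) s) ^ k * pairC (lvec θ ω) (tauM (u : V m) s) ^ l)) =
        ((π * ‖K.orthogonalProjectionOnto ω‖ ^ (2 * (k + l)) : ℝ) : ℂ) := by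
    intro ω
    rw [pow_mul, hK_def, norm_sq_orthogonalProjectionOnto_span hv, Fin.sum_univ_two]
    simp only [conj_mul_self_pairC_lvec, intervalIntegral.integral_const, sub_zero,
      Complex.real_smul, Complex.ofReal_mul, pairR_eq_inner, Matrix.cons_val_zero,
      Matrix.cons_val_one, real_inner_comm (ω : V m)]
  rw [integral_congr_ae (.of_forall hθ), integral_complex_ofReal, integral_const_mul,
    integral_sphere_norm_orthogonalProjectionOnto_pow K hK, finrank_euclideanSpace_fin,
    Real.rpow_add_one pi_ne_zero]
  push_cast
  ring

/-- Proposition 3.1, norms of the functions `f_{τ,k,ℓ}`. -/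
theorem stmt4 (m : ℕ) (hm : 3 ≤ m)
    (u s : sphere (0 : V m) 1) (hus : pairR (u : V m) (s : V m) = 0) (k l : ℕ) :
    (∫ ω : sphere (0 : V m) 1,
      (∫ θ in (0:ℝ)..Real.pi,
        (starRingEnd ℂ)
            (pairC (lvec θ ω) (tauP (u : V m) (s : V m)) ^ k * pairC (lvec θ ω) (tauM (u : V m) (s : V m)) ^ l) *
          (pairC (lvec θ ω) (tauP (u : V m) (s : V m)) ^ k * pairC (lvec θ ω) (tauM (u : V m) (s : V m)) ^ l))
      ∂(sphMeasure m)) =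
    ((2 * Real.pi ^ ((m : ℝ) / 2 + 1) *
        (Real.Gamma ((k : ℝ) + l + 1) / Real.Gamma ((k : ℝ) + l + (m : ℝ) / 2)) : ℝ) : ℂ) :=
  stmt4_general m u s hus k l
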